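/- arXiv:1212.2350 — 4 statements merged into one kernel-verified Lean document; each statement's English description precedes it below -/
import Mathlib

section
/- If every rule of R₁ is strictly decreasing under a monotone polynomial interpretation φ over ℕ (i.e., for every rule l → r in R₁ and every valuation α, ⟦l⟧_α > ⟦r⟧_α), and the rewrite relation generated by R₂ is well-founded, and every rule of R₂ is weakly decreasing under φ, then the rewrite relation generated by R₁ ∪ R₂ is well-founded. -/
inductive Term (F : Type) (ar : F → ℕ) (X : Type) : Type
  | var : X → Term F ar X
  | fn : (f : F) → (Fin (ar f) → Term F ar X) → Term F ar X

def subst {F X : Type} {ar : F → ℕ} (σ : X → Term F ar X) : Term F ar X → Term F ar X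
  | .var x => σ x
  | .fn f args => .fn f (fun i => subst σ (args i))

inductive Rew {F X : Type} {ar : F → ℕ} (R : Set (Term F ar X × Term F ar X)) :
    Term F ar X → Term F ar X → Prop
  | rule : ∀ (l r : Term F ar X) (σ : X → Term F ar X), (l, r) ∈ R →
      Rew R (subst σ l) (subst σ r)
  | ctx : ∀ (f : F) (args : Fin (ar f) → Term F ar X) (i : Fin (ar f)) (t u : Term F ar X),
      Rew R t u →
      Rew R (.fn f (Function.update args i t)) (.fn f (Function.update args i u))

/-- A relation terminates iff there is no infinite chain, i.e. its flip is well-founded. -/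
def Terminating {α : Type _} (r : α → α → Prop) : Prop := WellFounded (fun a b => r b a)
/-- Interpretation of terms in ℕ induced by an interpretation of symbols. -/
def evalT {F X : Type} {ar : F → ℕ} (φ : (f : F) → (Fin (ar f) → ℕ) → ℕ)
    (α : X → ℕ) : Term F ar X → ℕ
  | .var x => α x
  | .fn f args => φ f (fun i => evalT φ α (args i))

/-- φ is (strictly) monotone in every argument of every symbol. -/
def Monot {F : Type} {ar : F → ℕ} (φ : (f : F) → (Fin (ar f) → ℕ) → ℕ) : Prop :=
  ∀ (f : F) (v : Fin (ar f) → ℕ) (i : Fin (ar f)) (a b : ℕ), a < b →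
    φ f (Function.update v i a) < φ f (Function.update v i b)


/-! Every rewrite step of `R₁ ∪ R₂` either strictly decreases the interpretation of a term under
the zero valuation (an `R₁`-step) or keeps it from increasing while being an `R₂`-step. Hence each
step decreases the pair (interpretation, term) in the lexicographic product of `<` on `ℕ` with the
well-founded converse of `→_{R₂}`. -/

section

variable {F X : Type} {ar : F → ℕ}

theorem evalT_subst (φ : (f : F) → (Fin (ar f) → ℕ) → ℕ) (α : X → ℕ) (σ : X → Term F ar X)
    (t : Term F ar X) : evalT φ α (subst σ t) = evalT φ (fun x => evalT φ α (σ x)) t := by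
  induction t with
  | var x => rfl
  | fn f args ih => simp only [subst, evalT, ih]

theorem Monot.strictMono_update {φ : (f : F) → (Fin (ar f) → ℕ) → ℕ} (hmon : Monot φ) (f : F)
    (v : Fin (ar f) → ℕ) (i : Fin (ar f)) : StrictMono fun a => φ f (Function.update v i a) :=
  fun a b h => hmon f v i a b h

theorem Rew.evalT_rel {R : Set (Term F ar X × Term F ar X)} {φ : (f : F) → (Fin (ar f) → ℕ) → ℕ}
    (rel : ℕ → ℕ → Prop)
    (hφ : ∀ f v i a b, rel a b → rel (φ f (Function.update v i a)) (φ f (Function.update v i b)))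
    (hR : ∀ p ∈ R, ∀ α : X → ℕ, rel (evalT φ α p.2) (evalT φ α p.1))
    {t u : Term F ar X} (h : Rew R t u) (α : X → ℕ) : rel (evalT φ α u) (evalT φ α t) := by
  induction h with
  | rule l r σ hmem =>
    rw [evalT_subst, evalT_subst]
    exact hR (l, r) hmem _
  | ctx f args i t u _ ih =>
    have hcomp : ∀ s, (fun j => evalT φ α (Function.update args i s j))
        = Function.update (fun j => evalT φ α (args j)) i (evalT φ α s) :=
      fun s => Function.comp_update (evalT φ α) args i s
    simp only [evalT, hcomp]
    exact hφ f _ i _ _ ih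

theorem Rew.of_union {R₁ R₂ : Set (Term F ar X × Term F ar X)} {t u : Term F ar X}
    (h : Rew (R₁ ∪ R₂) t u) : Rew R₁ t u ∨ Rew R₂ t u := by
  induction h with
  | rule l r σ hmem => exact hmem.imp (Rew.rule l r σ) (Rew.rule l r σ)
  | ctx f args i t u _ ih => exact ih.imp (Rew.ctx f args i t u) (Rew.ctx f args i t u)

theorem Terminating.or_of_measure {α : Type*} {r s : α → α → Prop} (m : α → ℕ)
    (hs : Terminating s) (hr_lt : ∀ a b, r a b → m b < m a) (hs_le : ∀ a b, s a b → m b ≤ m a) :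
    Terminating fun a b => r a b ∨ s a b := by
  have hlex : WellFounded (Prod.Lex (· < · : ℕ → ℕ → Prop) fun a b => s b a) :=
    WellFounded.prod_lex wellFounded_lt hs
  refine Subrelation.wf ?_ (InvImage.wf (fun a => (m a, a)) hlex)
  intro b a hab
  rcases hab with hab | hab
  · exact Prod.Lex.left _ _ (hr_lt a b hab)
  · rcases (hs_le a b hab).lt_or_eq with hlt | heq
    · exact Prod.Lex.left _ _ hlt
    · show Prod.Lex _ _ (m b, b) (m a, a)
      rw [heq]
      exact Prod.Lex.right _ hab

end

/-- Rule removal by monotone polynomial interpretation over ℕ. -/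
theorem rule_removal_poly_interpretation
    (F X : Type) (ar : F → ℕ)
    (R₁ R₂ : Set (Term F ar X × Term F ar X))
    (φ : (f : F) → (Fin (ar f) → ℕ) → ℕ)
    (hmon : Monot φ)
    (hstrict : ∀ p ∈ R₁, ∀ α : X → ℕ, evalT φ α p.2 < evalT φ α p.1)
    (hweak : ∀ p ∈ R₂, ∀ α : X → ℕ, evalT φ α p.2 ≤ evalT φ α p.1)
    (hwf : Terminating (Rew R₂)) :
    Terminating (Rew (R₁ ∪ R₂)) := by
  let α₀ : X → ℕ := fun _ => 0
  have hlt : ∀ t u, Rew R₁ t u → evalT φ α₀ u < evalT φ α₀ t := fun _ _ h =>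
    h.evalT_rel (· < · : ℕ → ℕ → Prop)
      (fun f v i _ _ => (hmon.strictMono_update f v i ·)) hstrict α₀
  have hle : ∀ t u, Rew R₂ t u → evalT φ α₀ u ≤ evalT φ α₀ t := fun _ _ h =>
    h.evalT_rel (· ≤ · : ℕ → ℕ → Prop)
      (fun f v i _ _ => ((hmon.strictMono_update f v i).monotone ·)) hweak α₀
  exact Subrelation.wf Rew.of_union (Terminating.or_of_measure (evalT φ α₀) hwf hlt hle)
end

section
/- Signature extension reflects termination: if F ⊆ G are signatures (with G's arity function extending F's) and R is a set of rewrite rules whose terms lie in T(F,X), then the rewrite relation generated by R on T(F,X) is well-founded if and only if the rewrite relation generated by R on T(G,X) is well-founded. -/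
/-- Homomorphic extension to terms of an arity-preserving map of signatures. -/
def mapTerm {F G X : Type} {arF : F → ℕ} {arG : G → ℕ}
    (φ : F → G) (h : ∀ f, arG (φ f) = arF f) : Term F arF X → Term G arG X
  | .var x => .var x
  | .fn f args => .fn (φ f) (fun i => mapTerm φ h (args (Fin.cast (h f) i)))

/-- Image of a set of rules under a signature morphism. -/
def mapRules {F G X : Type} {arF : F → ℕ} {arG : G → ℕ}
    (φ : F → G) (h : ∀ f, arG (φ f) = arF f)
    (R : Set (Term F arF X × Term F arF X)) :
    Set (Term G arG X × Term G arG X) :=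
  { p | ∃ l r, (l, r) ∈ R ∧ p = (mapTerm φ h l, mapTerm φ h r) }

/-!
Mapping terms along `ι` turns `R`-steps into steps of the image rules, so termination over `G`
gives termination over `F`. Conversely, a rule whose right-hand side has a variable missing on the
left never terminates, so we may assume variable containment. Cut a `G`-term into its cap, the top
part built from symbols in the image of `ι`, and its aliens, the maximal subterms rooted outside
it; collapsing the aliens to a fixed `F`-term `b` turns the cap into an `F`-term. A `G`-step either
happens inside an alien and leaves the cap unchanged, or is an `R`-step of the cap: left-hand sides
are `F`-terms, and by variable containment it creates no new aliens. Termination then follows by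
well-founded induction on the cap along `R`, nested with induction on steps inside aliens; these
terminate once the aliens' arguments do, which holds by structural induction on the term.
-/

open Function

theorem acc_update_of_forall {ι β : Type*} [LinearOrder ι] [Finite ι] {r : β → β → Prop}
    (a : ι → β) (ha : ∀ i, Acc r (a i)) :
    Acc (fun b a => ∃ i u, r u (a i) ∧ b = update a i u) a := by
  classical
  have hwf : WellFounded (Pi.Lex (· < ·) fun {_ : ι} (x y : {x // Acc r x}) => r x.1 y.1) :=
    Pi.Lex.wellFounded _ fun _ => ⟨fun x => InvImage.accessible Subtype.val x.2⟩
  suffices ∀ v : ι → {x // Acc r x}, Acc _ (Subtype.val ∘ v) from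
    this fun i => ⟨a i, ha i⟩
  intro v
  induction v using hwf.induction with
  | _ v ih =>
  refine ⟨_, ?_⟩
  rintro _ ⟨i, u, hu, rfl⟩
  have hlt : Pi.Lex (· < ·) (fun x y => r x.1 y.1) (update v i ⟨u, (v i).2.inv hu⟩) v :=
    ⟨i, fun j hj => update_of_ne hj.ne _ _, by simpa using hu⟩
  simpa [comp_update] using ih _ hlt

namespace Term

variable {A Y : Type} {ar : A → ℕ}

theorem fn_congr {f f' : A} (h : f = f') {args : Fin (ar f) → Term A ar Y}
    {args' : Fin (ar f') → Term A ar Y} (hargs : ∀ i, args i = args' (Fin.cast (by rw [h]) i)) :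
    fn f args = fn f' args' := by
  subst h
  exact congrArg _ (funext hargs)

theorem acc_fn {T s : Term A ar Y → Term A ar Y → Prop} {g : A}
    (hT : ∀ args u, T u (fn g args) → ∃ i w, s w (args i) ∧ u = fn g (update args i w))
    (args : Fin (ar g) → Term A ar Y) (h : ∀ i, Acc s (args i)) : Acc T (fn g args) := by
  have hargs := acc_update_of_forall args h
  clear h
  induction hargs with
  | intro args _ ih =>
  refine ⟨_, fun u hu => ?_⟩
  obtain ⟨i, w, hw, rfl⟩ := hT args u hu
  exact ih _ ⟨i, w, hw, rfl⟩

def Occurs (x : Y) : Term A ar Y → Prop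
  | var y => x = y
  | fn _ args => ∃ i, Occurs x (args i)

theorem subst_congr {σ σ' : Y → Term A ar Y} :
    ∀ t : Term A ar Y, (∀ x, Occurs x t → σ x = σ' x) → subst σ t = subst σ' t
  | var x, h => h x rfl
  | fn f args, h => congrArg (fn f) <| funext fun i =>
      subst_congr (args i) fun x hx => h x ⟨i, hx⟩

inductive Subterm : Term A ar Y → Term A ar Y → Prop
  | refl (t) : Subterm t t
  | arg {t} (f args i) : Subterm t (args i) → Subterm t (fn f args)

theorem Subterm.trans {s t u : Term A ar Y} (hst : Subterm s t) (htu : Subterm t u) :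
    Subterm s u := by
  induction htu with
  | refl => exact hst
  | arg f args i _ ih => exact .arg f args i ih

theorem subterm_subst_of_occurs {σ : Y → Term A ar Y} {y : Y} :
    ∀ {t : Term A ar Y}, Occurs y t → Subterm (σ y) (subst σ t)
  | var _, rfl => .refl _
  | fn f args, ⟨i, h⟩ => .arg f (fun i => subst σ (args i)) i (subterm_subst_of_occurs h)

end Term

namespace Rew

open Term

variable {A Y : Type} {ar : A → ℕ} {R : Set (Term A ar Y × Term A ar Y)}

theorem fn_update {f : A} {args : Fin (ar f) → Term A ar Y} {i : Fin (ar f)}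
    {w : Term A ar Y} (h : Rew R (args i) w) : Rew R (fn f args) (fn f (update args i w)) := by
  simpa using Rew.ctx f args i _ w h

theorem nonempty {t u : Term A ar Y} (h : Rew R t u) : R.Nonempty := by
  induction h with
  | rule l r _ hlr => exact ⟨(l, r), hlr⟩
  | ctx _ _ _ _ _ _ ih => exact ih

theorem exists_of_subterm {t t' v : Term A ar Y} (hv : Subterm t v) (h : Rew R t t') :
    ∃ v', Rew R v v' ∧ Subterm t' v' := by
  induction hv with
  | refl => exact ⟨t', h, .refl t'⟩
  | arg f args i _ ih =>
    obtain ⟨w, hw, hw'⟩ := ih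
    exact ⟨_, fn_update hw, .arg f _ i (by rwa [update_self])⟩

theorem not_terminating_of_rew_subterm {t t' : Term A ar Y} (h : Rew R t t')
    (ht : Subterm t t') : ¬ Terminating (Rew R) := fun hR => by
  obtain ⟨v, hv, hmin⟩ := hR.has_min {v | Subterm t v} ⟨t, .refl t⟩
  obtain ⟨v', hvv', hv'⟩ := exists_of_subterm hv h
  exact hmin v' (ht.trans hv') hvv'

/-- The instance `y ↦ l` of the rule rewrites `l` to a term containing `l`. -/
theorem not_terminating_of_not_occurs {l r : Term A ar Y} {y : Y} (hlr : (l, r) ∈ R)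
    (hr : Occurs y r) (hl : ¬ Occurs y l) : ¬ Terminating (Rew R) := by
  classical
  have hσl : subst (update var y (subst var l)) l = subst var l :=
    subst_congr l fun x hx => update_of_ne (by rintro rfl; exact hl hx) _ _
  have hsub := subterm_subst_of_occurs (σ := update var y (subst var l)) hr
  have hstep := Rew.rule l r (update var y (subst var l)) hlr
  rw [update_self] at hsub
  rw [hσl] at hstep
  exact not_terminating_of_rew_subterm hstep hsub

end Rew

section SignatureExtension

open Term

variable {F G X : Type} {arF : F → ℕ} {arG : G → ℕ}

section

variable {ι : F → G} {har : ∀ f, arG (ι f) = arF f}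

theorem mapTerm_subst (σ : X → Term F arF X) :
    ∀ t : Term F arF X,
      mapTerm ι har (subst σ t) = subst (mapTerm ι har ∘ σ) (mapTerm ι har t)
  | .var _ => rfl
  | .fn f args => congrArg (Term.fn (ι f)) <| funext fun i =>
      mapTerm_subst σ (args (Fin.cast (har f) i))

theorem Rew.map {R : Set (Term F arF X × Term F arF X)} {t u : Term F arF X}
    (h : Rew R t u) : Rew (mapRules ι har R) (mapTerm ι har t) (mapTerm ι har u) := by
  induction h with
  | rule l r σ hlr =>
    rw [mapTerm_subst, mapTerm_subst]
    exact Rew.rule _ _ _ ⟨l, r, hlr, rfl⟩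
  | ctx f args i t u _ ih =>
    have hmap : ∀ v, (fun j => mapTerm ι har (update args i v (Fin.cast (har f) j))) =
        update (mapTerm ι har ∘ args ∘ finCongr (har f)) ((finCongr (har f)).symm i)
          (mapTerm ι har v) := fun v => by
      rw [← comp_update, ← update_comp_equiv]
      rfl
    change Rew _ (.fn (ι f) _) (.fn (ι f) _)
    rw [hmap t, hmap u]
    exact Rew.ctx (ι f) _ _ _ _ ih

theorem Terminating.of_map {R : Set (Term F arF X × Term F arF X)}
    (h : Terminating (Rew (mapRules ι har R))) : Terminating (Rew R) :=
  Subrelation.wf (fun hab => Rew.map hab) (InvImage.wf (mapTerm ι har) h)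

end

variable (ι : F → G) (har : ∀ f, arG (ι f) = arF f) in
open Classical in
noncomputable def cap (b : Term F arF X) : Term G arG X → Term F arF X
  | .var x => .var x
  | .fn g args =>
    if h : g ∈ Set.range ι then
      .fn h.choose fun i =>
        cap b (args (Fin.cast ((har h.choose).symm.trans (congrArg arG h.choose_spec)) i))
    else b

open Classical in
def AlienArgsAcc (ι : F → G) (rel : Term G arG X → Term G arG X → Prop) :
    Term G arG X → Prop
  | .var _ => True
  | .fn g args =>
    if g ∈ Set.range ι then ∀ i, AlienArgsAcc ι rel (args i)
    else ∀ i, Acc (flip rel) (args i)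

/-- Steps at the root of an alien are left out: only a rule with a variable left-hand side applies
there, and such a step is an `R`-step of the cap. -/
inductive AlienStep (ι : F → G) (rel : Term G arG X → Term G arG X → Prop) :
    Term G arG X → Term G arG X → Prop
  | inAlien {g : G} (hg : g ∉ Set.range ι) (args : Fin (arG g) → Term G arG X) (i w) :
      rel (args i) w → AlienStep ι rel (.fn g args) (.fn g (update args i w))
  | inCap {g : G} (hg : g ∈ Set.range ι) (args : Fin (arG g) → Term G arG X) (i w) :
      AlienStep ι rel (args i) w → AlienStep ι rel (.fn g args) (.fn g (update args i w))

variable {ι : F → G} {har : ∀ f, arG (ι f) = arF f}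
  {rel : Term G arG X → Term G arG X → Prop}

theorem cap_fn_map (hinj : Injective ι) (b : Term F arF X) (f : F)
    (args : Fin (arG (ι f)) → Term G arG X) :
    cap ι har b (.fn (ι f) args) = .fn f (cap ι har b ∘ args ∘ finCongr (har f).symm) := by
  rw [cap, dif_pos ⟨f, rfl⟩]
  exact fn_congr (hinj (Set.mem_range_self f).choose_spec) fun _ => rfl

theorem cap_fn_of_notMem (b : Term F arF X) {g : G} (hg : g ∉ Set.range ι)
    (args : Fin (arG g) → Term G arG X) : cap ι har b (.fn g args) = b := by
  rw [cap, dif_neg hg]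

theorem cap_subst_mapTerm (hinj : Injective ι) (b : Term F arF X) (σ : X → Term G arG X) :
    ∀ t : Term F arF X, cap ι har b (subst σ (mapTerm ι har t)) = subst (cap ι har b ∘ σ) t
  | .var _ => rfl
  | .fn f args => by
    rw [mapTerm, subst, cap_fn_map hinj, subst]
    congr 1
    funext i
    simp [cap_subst_mapTerm hinj b σ (args i)]

theorem alienArgsAcc_fn_of_mem {g : G} (hg : g ∈ Set.range ι)
    (args : Fin (arG g) → Term G arG X) :
    AlienArgsAcc ι rel (.fn g args) ↔ ∀ i, AlienArgsAcc ι rel (args i) := by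
  simp [AlienArgsAcc, hg]

theorem alienArgsAcc_fn_of_notMem {g : G} (hg : g ∉ Set.range ι)
    (args : Fin (arG g) → Term G arG X) :
    AlienArgsAcc ι rel (.fn g args) ↔ ∀ i, Acc (flip rel) (args i) := by
  simp [AlienArgsAcc, hg]

theorem alienArgsAcc_subst_mapTerm (σ : X → Term G arG X) :
    ∀ t : Term F arF X,
      AlienArgsAcc ι rel (subst σ (mapTerm ι har t)) ↔
        ∀ x, Occurs x t → AlienArgsAcc ι rel (σ x)
  | .var x => by simp [Occurs, mapTerm, subst]
  | .fn f args => by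
    rw [mapTerm, subst, alienArgsAcc_fn_of_mem (Set.mem_range_self f)]
    simp only [alienArgsAcc_subst_mapTerm σ, Occurs]
    exact ⟨fun h x ⟨i, hi⟩ => h (Fin.cast (har f).symm i) x (by simpa using hi),
      fun h i x hi => h x ⟨_, hi⟩⟩

theorem AlienStep.cap_eq (hinj : Injective ι) (b : Term F arF X) {t u : Term G arG X}
    (h : AlienStep ι rel t u) : cap ι har b u = cap ι har b t := by
  induction h with
  | inAlien hg args i w _ => rw [cap_fn_of_notMem b hg, cap_fn_of_notMem b hg]
  | inCap hg args i w _ ih =>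
    obtain ⟨f, rfl⟩ := hg
    rw [cap_fn_map hinj, cap_fn_map hinj, ← comp_assoc, comp_update, ih,
      ← comp_apply (f := cap ι har b), update_eq_self, comp_assoc]

theorem AlienStep.alienArgsAcc {t u : Term G arG X} (h : AlienStep ι rel t u)
    (ht : AlienArgsAcc ι rel t) : AlienArgsAcc ι rel u := by
  induction h with
  | inAlien hg args i w hw =>
    rw [alienArgsAcc_fn_of_notMem hg] at ht ⊢
    intro j
    rcases eq_or_ne j i with rfl | hj
    · simpa using (ht j).inv hw
    · simpa [hj] using ht j
  | inCap hg args i w _ ih =>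
    rw [alienArgsAcc_fn_of_mem hg] at ht ⊢
    intro j
    rcases eq_or_ne j i with rfl | hj
    · simpa using ih (ht j)
    · simpa [hj] using ht j

theorem acc_alienStep :
    ∀ t : Term G arG X, AlienArgsAcc ι rel t → Acc (flip (AlienStep ι rel)) t
  | .var _, _ => ⟨_, fun _ h => nomatch h⟩
  | .fn g args, ht => by
    by_cases hg : g ∈ Set.range ι
    · rw [alienArgsAcc_fn_of_mem hg] at ht
      refine acc_fn (s := flip (AlienStep ι rel)) (fun args u hu => ?_) args
        fun i => acc_alienStep _ (ht i)
      cases hu with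
      | inAlien hg' => exact absurd hg hg'
      | inCap _ _ i w hw => exact ⟨i, w, hw, rfl⟩
    · rw [alienArgsAcc_fn_of_notMem hg] at ht
      refine acc_fn (s := flip rel) (fun args u hu => ?_) args ht
      cases hu with
      | inAlien _ _ i w hw => exact ⟨i, w, hw, rfl⟩
      | inCap hg' => exact absurd hg' hg

variable {R : Set (Term F arF X × Term F arF X)}

theorem Rew.cap_or_alienStep (hinj : Injective ι)
    (hvar : ∀ l r y, (l, r) ∈ R → Occurs y r → Occurs y l) (b : Term F arF X)
    {t u : Term G arG X} (h : Rew (mapRules ι har R) t u) :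
    (Rew R (cap ι har b t) (cap ι har b u) ∧
        (AlienArgsAcc ι rel t → AlienArgsAcc ι rel u)) ∨
      AlienStep ι (Rew (mapRules ι har R)) t u := by
  induction h with
  | rule _ _ σ hmem =>
    obtain ⟨l, r, hlr, heq⟩ := hmem
    cases heq
    rw [cap_subst_mapTerm hinj, cap_subst_mapTerm hinj, alienArgsAcc_subst_mapTerm,
      alienArgsAcc_subst_mapTerm]
    exact .inl ⟨Rew.rule l r _ hlr, fun h x hx => h x (hvar l r x hlr hx)⟩
  | ctx g args i w w' hstep ih =>
    by_cases hg : g ∈ Set.range ι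
    · rcases ih with ⟨hcap, hacc⟩ | hstep'
      · refine .inl ⟨?_, ?_⟩
        · obtain ⟨f, rfl⟩ := hg
          rw [cap_fn_map hinj, cap_fn_map hinj, ← comp_assoc, ← comp_assoc, comp_update,
            comp_update, update_comp_equiv, update_comp_equiv]
          exact Rew.ctx f _ _ _ _ hcap
        · rw [alienArgsAcc_fn_of_mem hg, alienArgsAcc_fn_of_mem hg]
          intro h j
          rcases eq_or_ne j i with rfl | hj
          · simpa using hacc (by simpa using h j)
          · simpa [hj] using h j
      · exact .inr <| by
          simpa using AlienStep.inCap hg (update args i w) i w' (by simpa using hstep')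
    · exact .inr <| by
        simpa using AlienStep.inAlien hg (update args i w) i w' (by simpa using hstep)

theorem acc_of_alienArgsAcc (hinj : Injective ι)
    (hvar : ∀ l r y, (l, r) ∈ R → Occurs y r → Occurs y l) (hR : Terminating (Rew R))
    (b : Term F arF X) (t : Term G arG X) (ht : AlienArgsAcc ι (Rew (mapRules ι har R)) t) :
    Acc (flip (Rew (mapRules ι har R))) t := by
  obtain ⟨e, he⟩ : ∃ e, cap ι har b t = e := ⟨_, rfl⟩
  induction hR.apply e generalizing t with
  | intro e _ ihe =>
  induction acc_alienStep t ht with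
  | intro t _ iht =>
  refine ⟨_, fun u hu => ?_⟩
  rcases hu.cap_or_alienStep hinj hvar b with ⟨hcap, hacc⟩ | hstep
  · exact ihe _ (he ▸ hcap) u (hacc ht) rfl
  · exact iht u hstep (hstep.alienArgsAcc ht) ((hstep.cap_eq hinj b).trans he)

theorem alienArgsAcc_of_terminating (hinj : Injective ι)
    (hvar : ∀ l r y, (l, r) ∈ R → Occurs y r → Occurs y l) (hR : Terminating (Rew R))
    (b : Term F arF X) : ∀ t : Term G arG X, AlienArgsAcc ι (Rew (mapRules ι har R)) t
  | .var _ => trivial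
  | .fn g args => by
    by_cases hg : g ∈ Set.range ι
    · exact (alienArgsAcc_fn_of_mem hg args).2 fun i =>
        alienArgsAcc_of_terminating hinj hvar hR b (args i)
    · exact (alienArgsAcc_fn_of_notMem hg args).2 fun i =>
        acc_of_alienArgsAcc hinj hvar hR b _ (alienArgsAcc_of_terminating hinj hvar hR b (args i))

theorem Terminating.map (hinj : Injective ι)
    (hvar : ∀ l r y, (l, r) ∈ R → Occurs y r → Occurs y l) (hR : Terminating (Rew R)) :
    Terminating (Rew (mapRules ι har R)) := by
  refine ⟨fun t => ⟨t, fun u hu => ?_⟩⟩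
  -- `cap` needs some `F`-term to collapse aliens to; a left-hand side of the rule used will do.
  obtain ⟨_, b, -, -, -⟩ := hu.nonempty
  exact acc_of_alienArgsAcc hinj hvar hR b u (alienArgsAcc_of_terminating hinj hvar hR b u)

end SignatureExtension

/-- Signature extension reflects (and preserves) termination: for an arity-preserving
embedding ι : F → G, the rewrite relation generated by R on T(F,X) is well-founded iff
the rewrite relation generated by (the image of) R on T(G,X) is well-founded. -/
theorem signature_extension_reflects_termination
    (F G X : Type) (arF : F → ℕ) (arG : G → ℕ)
    (ι : F → G) (hinj : Function.Injective ι) (har : ∀ f, arG (ι f) = arF f)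
    (R : Set (Term F arF X × Term F arF X)) :
    Terminating (Rew R) ↔ Terminating (Rew (mapRules ι har R)) := by
  refine ⟨fun hR => hR.map hinj fun l r y hlr hy => ?_, Terminating.of_map⟩
  by_contra hl
  exact Rew.not_terminating_of_not_occurs hlr hy hl hR
end

section
/- If R and S are binary relations on a set A such that R^* ∘ S is well-founded and R is well-founded, then R ∪ S is well-founded on A. Conversely, if R ∪ S is well-founded then R^* ∘ S is well-founded. -/
open Relation

namespace Terminating

variable {α : Type*} {r s : α → α → Prop}

theorem mono (hs : Terminating s) (h : r ≤ s) : Terminating r :=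
  Subrelation.wf (fun hr => h _ _ hr) hs

theorem transGen (hr : Terminating r) : Terminating (TransGen r) :=
  WellFounded.transGen hr |>.mono fun _ _ h => transGen_swap.mp h

theorem comp_reflTransGen_of_sup (h : Terminating (r ⊔ s)) :
    Terminating (Comp (ReflTransGen r) s) :=
  h.transGen.mono fun _ _ ⟨_, hr, hs⟩ =>
    TransGen.tail' (ReflTransGen.mono le_sup_left _ _ hr) (Or.inr hs)

/-- The inner induction, on `r`; the outer one, on `r^* ∘ s`, supplies `ha`. -/
theorem acc_sup_of_reflTransGen (hr : Terminating r) {a : α}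
    (ha : ∀ c, Comp (ReflTransGen r) s a c → Acc (flip (r ⊔ s)) c) :
    ∀ x, ReflTransGen r a x → Acc (flip (r ⊔ s)) x := by
  intro x
  induction x using hr.induction with
  | _ x ih =>
    intro hax
    refine ⟨x, fun y hxy => ?_⟩
    rcases hxy with hxy | hxy
    · exact ih y hxy (hax.tail hxy)
    · exact ha y ⟨x, hax, hxy⟩

theorem sup_of_comp_reflTransGen (hc : Terminating (Comp (ReflTransGen r) s))
    (hr : Terminating r) : Terminating (r ⊔ s) :=
  ⟨fun a => by
    induction a using hc.induction with
    | _ a ih => exact acc_sup_of_reflTransGen hr ih a ReflTransGen.refl⟩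

end Terminating

/-- If R^* ∘ S and R are well-founded then R ∪ S is well-founded; conversely, if
R ∪ S is well-founded then R^* ∘ S is well-founded. -/
theorem union_wf_iff_comp_wf
    (A : Type) (R S : A → A → Prop) :
    ((Terminating (fun a c => ∃ b, Relation.ReflTransGen R a b ∧ S b c) ∧ Terminating R) →
      Terminating (fun a b => R a b ∨ S a b)) ∧
    (Terminating (fun a b => R a b ∨ S a b) →
      Terminating (fun a c => ∃ b, Relation.ReflTransGen R a b ∧ S b c)) :=
  ⟨fun ⟨hc, hr⟩ => hc.sup_of_comp_reflTransGen hr, Terminating.comp_reflTransGen_of_sup⟩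
end

section
/- Rule removal: let > be a well-founded order on terms stable under substitution and contexts, and ≥ a compatible quasi-order (> ∘ ≥ ⊆ > and ≥ stable under substitution and contexts). If every rule of R₁ is in > and every rule of R₂ is in ≥, then →_{R₁ ∪ R₂} is well-founded if and only if →_{R₂} is well-founded. In particular, if →_{R₂} terminates then →_{R₁ ∪ R₂} terminates. -/
section Termination

variable {α : Type*} {a b : α → α → Prop}

theorem Terminating.mono_s9 {r s : α → α → Prop} (hr : Terminating r)
    (hsr : ∀ x y, s x y → r x y) : Terminating s :=
  Subrelation.wf (hsr _ _) hr

theorem Terminating.acc_or_of_rel (hb : Terminating b) (hab : ∀ x y z, a x y → b y z → a x z)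
    {x : α} (hx : Acc (fun p q => a q p) x) :
    ∀ y, a x y → Acc (fun p q => a q p ∨ b q p) y := by
  induction hx with
  | intro x _ ihx =>
    intro y hxy
    induction hb.apply y with
    | intro y _ ihy =>
      refine ⟨y, fun z hyz => ?_⟩
      rcases hyz with hyz | hyz
      · exact ihx y hxy z hyz
      · exact ihy z hyz (hab x y z hxy hyz)

theorem Terminating.or (ha : Terminating a) (hb : Terminating b)
    (hab : ∀ x y z, a x y → b y z → a x z) : Terminating (fun x y => a x y ∨ b x y) := by
  refine ⟨fun x => ?_⟩
  induction hb.apply x with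
  | intro x _ ihx =>
    refine ⟨x, fun y hxy => ?_⟩
    rcases hxy with hxy | hxy
    · exact hb.acc_or_of_rel hab (ha.apply x) y hxy
    · exact ihx y hxy

end Termination

namespace Rew

variable {F X : Type} {ar : F → ℕ}

theorem mono_s9 {R S : Set (Term F ar X × Term F ar X)} (hRS : R ⊆ S) {t u : Term F ar X}
    (h : Rew R t u) : Rew S t u := by
  induction h with
  | rule l r σ hlr => exact rule l r σ (hRS hlr)
  | ctx f args i _ _ _ ih => exact ctx f args i _ _ ih

theorem rel_of_stable {R : Set (Term F ar X × Term F ar X)}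
    {rel : Term F ar X → Term F ar X → Prop}
    (hsubst : ∀ t u (σ : X → Term F ar X), rel t u → rel (subst σ t) (subst σ u))
    (hctx : ∀ (f : F) (args : Fin (ar f) → Term F ar X) (i : Fin (ar f)) (t u : Term F ar X),
      rel t u → rel (.fn f (Function.update args i t)) (.fn f (Function.update args i u)))
    (hR : ∀ p ∈ R, rel p.1 p.2) {t u : Term F ar X} (h : Rew R t u) : rel t u := by
  induction h with
  | rule l r σ hlr => exact hsubst l r σ (hR _ hlr)
  | ctx f args i _ _ _ ih => exact hctx f args i _ _ ih

theorem or_of_union {R₁ R₂ : Set (Term F ar X × Term F ar X)} {t u : Term F ar X}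
    (h : Rew (R₁ ∪ R₂) t u) : Rew R₁ t u ∨ Rew R₂ t u := by
  induction h with
  | rule l r σ hlr => exact hlr.imp (rule l r σ) (rule l r σ)
  | ctx f args i _ _ _ ih => exact ih.imp (ctx f args i _ _) (ctx f args i _ _)

end Rew

theorem rule_removal_general
    (F X : Type) (ar : F → ℕ)
    (gt ge : Term F ar X → Term F ar X → Prop)
    (hwf : Terminating gt)
    (hgt_subst : ∀ t u (σ : X → Term F ar X), gt t u → gt (subst σ t) (subst σ u))
    (hgt_ctx : ∀ (f : F) (args : Fin (ar f) → Term F ar X) (i : Fin (ar f)) (t u : Term F ar X),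
      gt t u → gt (.fn f (Function.update args i t)) (.fn f (Function.update args i u)))
    (hge_subst : ∀ t u (σ : X → Term F ar X), ge t u → ge (subst σ t) (subst σ u))
    (hge_ctx : ∀ (f : F) (args : Fin (ar f) → Term F ar X) (i : Fin (ar f)) (t u : Term F ar X),
      ge t u → ge (.fn f (Function.update args i t)) (.fn f (Function.update args i u)))
    (hcompat : ∀ t u v, gt t u → ge u v → gt t v)
    (R₁ R₂ : Set (Term F ar X × Term F ar X))
    (h1 : ∀ p ∈ R₁, gt p.1 p.2) (h2 : ∀ p ∈ R₂, ge p.1 p.2) :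
    Terminating (Rew (R₁ ∪ R₂)) ↔ Terminating (Rew R₂) := by
  refine ⟨fun h => h.mono_s9 fun _ _ => Rew.mono_s9 Set.subset_union_right, fun h2wf => ?_⟩
  have hR₁_gt : ∀ {t u}, Rew R₁ t u → gt t u := Rew.rel_of_stable hgt_subst hgt_ctx h1
  have hR₂_ge : ∀ {t u}, Rew R₂ t u → ge t u := Rew.rel_of_stable hge_subst hge_ctx h2
  have hgt_or_R₂ : Terminating fun t u => gt t u ∨ Rew R₂ t u :=
    hwf.or h2wf fun t u v htu huv => hcompat t u v htu (hR₂_ge huv)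
  exact hgt_or_R₂.mono_s9 fun _ _ h => (Rew.or_of_union h).imp_left hR₁_gt

/-- Rule removal: if every rule of R₁ lies in a well-founded order > (stable under
substitution and contexts) and every rule of R₂ lies in a compatible stable quasi-order ≥,
then →_{R₁ ∪ R₂} is well-founded iff →_{R₂} is well-founded. -/
theorem rule_removal
    (F X : Type) (ar : F → ℕ)
    (gt ge : Term F ar X → Term F ar X → Prop)
    (hwf : Terminating gt)
    (hgt_subst : ∀ t u (σ : X → Term F ar X), gt t u → gt (subst σ t) (subst σ u))
    (hgt_ctx : ∀ (f : F) (args : Fin (ar f) → Term F ar X) (i : Fin (ar f)) (t u : Term F ar X),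
      gt t u → gt (.fn f (Function.update args i t)) (.fn f (Function.update args i u)))
    (hge_subst : ∀ t u (σ : X → Term F ar X), ge t u → ge (subst σ t) (subst σ u))
    (hge_ctx : ∀ (f : F) (args : Fin (ar f) → Term F ar X) (i : Fin (ar f)) (t u : Term F ar X),
      ge t u → ge (.fn f (Function.update args i t)) (.fn f (Function.update args i u)))
    (hrefl : Reflexive ge) (htransge : Transitive ge)
    (hcompat : ∀ t u v, gt t u → ge u v → gt t v)
    (R₁ R₂ : Set (Term F ar X × Term F ar X))
    (h1 : ∀ p ∈ R₁, gt p.1 p.2) (h2 : ∀ p ∈ R₂, ge p.1 p.2) :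
    Terminating (Rew (R₁ ∪ R₂)) ↔ Terminating (Rew R₂) :=
  rule_removal_general F X ar gt ge hwf hgt_subst hgt_ctx hge_subst hge_ctx hcompat R₁ R₂ h1 h2
end
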